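/- arXiv:0906.5436 — 2 statements merged into one kernel-verified Lean document; each statement's English description precedes it below -/
import Mathlib

section
/- Let X₁, X₂ be independent with law U_T. Then the arc probability μ(r) := P(X₂ ∈ N^r(X₁)) satisfies: μ(r) = (37/216)·r² for r ∈ [1, 3/2); μ(r) = −r²/8 + 4 − 8·r⁻¹ + (9/2)·r⁻² for r ∈ [3/2, 2); and μ(r) = 1 − (3/2)·r⁻² for r ∈ [2, ∞). -/
open MeasureTheory Real Set

noncomputable section

/-- The z-component of the cross product of two planar vectors. -/
def cross (u v : ℝ × ℝ) : ℝ := u.1 * v.2 - u.2 * v.1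

/-- Barycentric coordinates of `x` with respect to the triangle with
vertices `a`, `b`, `c`. -/
def bary (a b c x : ℝ × ℝ) : Fin 3 → ℝ := fun i =>
  if i = 1 then cross (x - a) (c - a) / cross (b - a) (c - a)
  else if i = 2 then cross (b - a) (x - a) / cross (b - a) (c - a)
  else 1 - cross (x - a) (c - a) / cross (b - a) (c - a)
    - cross (b - a) (x - a) / cross (b - a) (c - a)

/-- The closed triangle with vertices `a`, `b`, `c` (the set of points with
nonnegative barycentric coordinates). -/
def tri (a b c : ℝ × ℝ) : Set (ℝ × ℝ) := {x | ∀ i : Fin 3, 0 ≤ bary a b c x i}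

/-- The least index maximizing the barycentric coordinates of `x`. -/
def jmax (a b c x : ℝ × ℝ) : Fin 3 :=
  if bary a b c x 1 ≤ bary a b c x 0 ∧ bary a b c x 2 ≤ bary a b c x 0 then 0
  else if bary a b c x 2 ≤ bary a b c x 1 then 1 else 2

/-- The `r`-factor proximity region of `x` in the triangle with vertices `a`, `b`, `c`:
`N^r(x) = {z ∈ T : 1 − β_{j(x)}(z) ≤ r (1 − β_{j(x)}(x))}`. -/
def prox (a b c : ℝ × ℝ) (r : ℝ) (x : ℝ × ℝ) : Set (ℝ × ℝ) :=
  {z | z ∈ tri a b c ∧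
    1 - bary a b c z (jmax a b c x) ≤ r * (1 - bary a b c x (jmax a b c x))}

/-- The uniform probability measure on `s ⊆ ℝ²` (normalized Lebesgue measure). -/
def unif (s : Set (ℝ × ℝ)) : Measure (ℝ × ℝ) := (volume s)⁻¹ • volume.restrict s

def y1 : ℝ × ℝ := (0, 0)
def y2 : ℝ × ℝ := (1, 0)
def y3 : ℝ × ℝ := (1 / 2, Real.sqrt 3 / 2)

/-- The standard equilateral triangle. -/
def T : Set (ℝ × ℝ) := tri y1 y2 y3

/-- The `r`-factor proximity region in the standard triangle. -/
def N (r : ℝ) (x : ℝ × ℝ) : Set (ℝ × ℝ) := prox y1 y2 y3 r x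

/-- The null arc probability `μ(r) = P(X₂ ∈ N^r(X₁))` for independent uniform
points in the standard triangle. -/
def mu (r : ℝ) : ℝ := (((unif T).prod (unif T)) {p | p.2 ∈ N r p.1}).toReal

/-!
For `x` in a triangle let `d(x) = 1 - max_i β_i(x)`. The region `N^r(x)` is the set of points
`z` of the triangle with `β_j(z) ≥ 1 - r d(x)`, `j = j(x)`; such a "corner" `{z | κ ≤ β(z)}` is a
homothetic copy of the triangle with ratio `1 - ∑ κ`, so `P(X₂ ∈ N^r(x)) = min(1, r d(x))²`.
By the layer-cake formula, `μ(r) = E[min(1, r d)²] = ∫₀¹ 2t P(d > t/r) dt`, and `P(d > w)` is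
computed by inclusion–exclusion over the three corners `{β_i ≥ 1 - w}`. After the substitution
`w = t/r`, `μ(r) = r² ∫₀^{1/r} 2w P(d > w) dw`, a piecewise polynomial in `1/r`; as `d ≤ 2/3`,
it equals `(37/216) r²` for `r ≤ 3/2`. The argument is affine-invariant and works for any
nondegenerate triangle.
-/

open scoped Pointwise

theorem measureReal_union_union {α : Type*} [MeasurableSpace α] {μ : Measure α}
    {A B C : Set α} (hB : MeasurableSet B) (hC : MeasurableSet C) (hμA : μ A ≠ ⊤)
    (hμB : μ B ≠ ⊤) (hμC : μ C ≠ ⊤) :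
    μ.real (A ∪ B ∪ C) = μ.real A + μ.real B + μ.real C - μ.real (A ∩ B) - μ.real (A ∩ C)
      - μ.real (B ∩ C) + μ.real (A ∩ B ∩ C) := by
  have hAB := measureReal_union_add_inter hB hμA hμB
  have hABC := measureReal_union_add_inter hC (measure_union_ne_top hμA hμB) hμC
  have hACBC := measureReal_union_add_inter (s := A ∩ C) (hB.inter hC)
    (measure_inter_ne_top_of_left_ne_top (t := C) hμA)
    (measure_inter_ne_top_of_left_ne_top (t := C) hμB)
  rw [union_inter_distrib_right] at hABC
  rw [show A ∩ C ∩ (B ∩ C) = A ∩ B ∩ C by ext; simp only [mem_inter_iff]; tauto] at hACBC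
  linarith

theorem lintegral_ofReal_sq {α : Type*} [MeasurableSpace α] (μ : Measure α) {f : α → ℝ}
    (hf_nn : 0 ≤ᵐ[μ] f) (hf : AEMeasurable f μ) :
    ∫⁻ x, ENNReal.ofReal (f x ^ 2) ∂μ =
      ∫⁻ t in Ioi 0, μ {x | t < f x} * ENNReal.ofReal (2 * t) := by
  have hsq : ∀ y : ℝ, ∫ t in (0 : ℝ)..y, 2 * t = y ^ 2 := fun y => by
    rw [intervalIntegral.integral_const_mul, integral_id]
    ring
  simpa only [hsq] using lintegral_comp_eq_lintegral_meas_lt_mul μ hf_nn hf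
    (g := fun t => 2 * t) (fun _ _ => (continuous_const.mul continuous_id).intervalIntegrable _ _)
    ((ae_restrict_iff' measurableSet_Ioi).2 (.of_forall fun t (ht : 0 < t) => by positivity))

theorem setLIntegral_Ioo_ofReal {f : ℝ → ℝ} {a b : ℝ} (hab : a ≤ b)
    (hf : ContinuousOn f (Icc a b)) (hf_nn : ∀ t ∈ Ioo a b, 0 ≤ f t) :
    ∫⁻ t in Ioo a b, ENNReal.ofReal (f t) = ENNReal.ofReal (∫ t in a..b, f t) := by
  rw [intervalIntegral.integral_of_le hab, integral_Ioc_eq_integral_Ioo,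
    ofReal_integral_eq_lintegral_ofReal (hf.integrableOn_Icc.mono_set Ioo_subset_Icc_self)
      ((ae_restrict_iff' measurableSet_Ioo).2 (.of_forall hf_nn))]

theorem integral_cubic (a b c₁ c₂ c₃ : ℝ) :
    ∫ w in a..b, (c₁ * w + c₂ * w ^ 2 + c₃ * w ^ 3) =
      (c₁ / 2 * b ^ 2 + c₂ / 3 * b ^ 3 + c₃ / 4 * b ^ 4)
        - (c₁ / 2 * a ^ 2 + c₂ / 3 * a ^ 3 + c₃ / 4 * a ^ 4) := by
  apply intervalIntegral.integral_eq_sub_of_hasDerivAt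
  · intro x _
    convert (((hasDerivAt_pow 2 x).const_mul (c₁ / 2)).add
      ((hasDerivAt_pow 3 x).const_mul (c₂ / 3))).add
        ((hasDerivAt_pow 4 x).const_mul (c₃ / 4)) using 1
    · rfl
    · norm_num
      ring
  · apply Continuous.intervalIntegrable
    fun_prop

/-- `P(1 - max_i β_i(X) > w)` for `X` uniform on a triangle and `0 ≤ w ≤ 1`: inclusion–exclusion
over the corners `{β_i ≥ 1 - w}`, whose pairwise intersections have ratio `2w - 1`
and whose triple intersection has ratio `3w - 2`. -/
def tailProb (w : ℝ) : ℝ := 1 - 3 * w ^ 2 + 3 * max 0 (2 * w - 1) ^ 2 - max 0 (3 * w - 2) ^ 2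

theorem continuous_tailProb : Continuous tailProb := by
  unfold tailProb
  fun_prop

theorem tailProb_of_le_half {w : ℝ} (hw : w ≤ 1 / 2) : tailProb w = 1 - 3 * w ^ 2 := by
  rw [tailProb, max_eq_left (by linarith), max_eq_left (by linarith)]
  ring

theorem tailProb_of_mem_Icc {w : ℝ} (hw₁ : 1 / 2 ≤ w) (hw₂ : w ≤ 2 / 3) :
    tailProb w = (2 - 3 * w) ^ 2 := by
  rw [tailProb, max_eq_right (by linarith), max_eq_left (by linarith)]
  ring

theorem tailProb_of_two_thirds_le {w : ℝ} (hw : 2 / 3 ≤ w) : tailProb w = 0 := by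
  rw [tailProb, max_eq_right (by linarith), max_eq_right (by linarith)]
  ring

theorem tailProb_nonneg {w : ℝ} (hw : 0 ≤ w) : 0 ≤ tailProb w := by
  rcases le_total w (1 / 2) with h₁ | h₁
  · rw [tailProb_of_le_half h₁]
    nlinarith
  rcases le_total w (2 / 3) with h₂ | h₂
  · rw [tailProb_of_mem_Icc h₁ h₂]
    positivity
  · rw [tailProb_of_two_thirds_le h₂]

def tailMoment (y : ℝ) : ℝ := ∫ w in (0 : ℝ)..y, 2 * w * tailProb w

theorem integral_tailProb_div {r : ℝ} (hr : r ≠ 0) :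
    ∫ t in (0 : ℝ)..1, 2 * t * tailProb (t / r) = r ^ 2 * tailMoment (1 / r) := by
  have h : ∀ t, 2 * t * tailProb (t / r) = r * (2 * (t / r) * tailProb (t / r)) := fun t => by
    field_simp
  simp_rw [h]
  rw [intervalIntegral.integral_const_mul,
    intervalIntegral.integral_comp_div (fun w => 2 * w * tailProb w) hr, zero_div, smul_eq_mul,
    tailMoment]
  ring

theorem intervalIntegrable_tailMoment_integrand (a b : ℝ) :
    IntervalIntegrable (fun w => 2 * w * tailProb w) volume a b := by
  have := continuous_tailProb
  exact Continuous.intervalIntegrable (by fun_prop) a b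

theorem tailMoment_of_le_half {y : ℝ} (hy₀ : 0 ≤ y) (hy : y ≤ 1 / 2) :
    tailMoment y = y ^ 2 - 3 / 2 * y ^ 4 := by
  rw [tailMoment, intervalIntegral.integral_congr (g := fun w => 2 * w + 0 * w ^ 2 + -6 * w ^ 3)
    fun w hw => ?_, integral_cubic]
  · ring
  · rw [uIcc_of_le hy₀] at hw
    simp only [tailProb_of_le_half (hw.2.trans hy)]
    ring

theorem tailMoment_of_mem_Icc {y : ℝ} (hy₁ : 1 / 2 ≤ y) (hy₂ : y ≤ 2 / 3) :
    tailMoment y = -1 / 8 + 4 * y ^ 2 - 8 * y ^ 3 + 9 / 2 * y ^ 4 := by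
  rw [tailMoment, ← intervalIntegral.integral_add_adjacent_intervals
      (intervalIntegrable_tailMoment_integrand 0 (1 / 2))
      (intervalIntegrable_tailMoment_integrand (1 / 2) y),
    ← tailMoment, tailMoment_of_le_half (by norm_num) le_rfl,
    intervalIntegral.integral_congr (g := fun w => 8 * w + -24 * w ^ 2 + 18 * w ^ 3)
      fun w hw => ?_, integral_cubic]
  · ring
  · rw [uIcc_of_le hy₁] at hw
    simp only [tailProb_of_mem_Icc hw.1 (hw.2.trans hy₂)]
    ring

theorem tailMoment_of_two_thirds_le {y : ℝ} (hy : 2 / 3 ≤ y) : tailMoment y = 37 / 216 := by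
  rw [tailMoment, ← intervalIntegral.integral_add_adjacent_intervals
      (intervalIntegrable_tailMoment_integrand 0 (2 / 3))
      (intervalIntegrable_tailMoment_integrand (2 / 3) y),
    ← tailMoment, tailMoment_of_mem_Icc (by norm_num) le_rfl,
    intervalIntegral.integral_congr (g := fun _ => (0 : ℝ)) fun w hw => ?_,
    intervalIntegral.integral_zero]
  · norm_num
  · rw [uIcc_of_le hy] at hw
    simp only [tailProb_of_two_thirds_le hw.1, mul_zero]

section Barycentric

variable {a b c : ℝ × ℝ}

theorem bary_zero_eq (a b c x : ℝ × ℝ) :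
    bary a b c x 0 = 1 - bary a b c x 1 - bary a b c x 2 := by
  simp [bary]

theorem sum_bary (a b c x : ℝ × ℝ) : ∑ i, bary a b c x i = 1 := by
  rw [Fin.sum_univ_three, bary_zero_eq]
  ring

theorem continuous_bary (a b c : ℝ × ℝ) (i : Fin 3) : Continuous fun x => bary a b c x i := by
  unfold bary cross
  split_ifs <;> fun_prop

theorem bary_le_one {x : ℝ × ℝ} (hx : x ∈ tri a b c) (i : Fin 3) : bary a b c x i ≤ 1 :=
  (Finset.single_le_sum (fun j _ => hx j) (Finset.mem_univ i)).trans_eq (sum_bary a b c x)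

theorem bary_homothety (hD : cross (b - a) (c - a) ≠ 0) {κ : Fin 3 → ℝ} {s : ℝ}
    (hκ : ∑ i, κ i + s = 1) (q : ℝ × ℝ) (i : Fin 3) :
    bary a b c (a + κ 1 • (b - a) + κ 2 • (c - a) + s • (q - a)) i =
      κ i + s * bary a b c q i := by
  have h₁₂ : ∀ i : Fin 3, i ≠ 0 → bary a b c (a + κ 1 • (b - a) + κ 2 • (c - a) + s • (q - a)) i =
      κ i + s * bary a b c q i := by
    intro i hi
    fin_cases i
    · exact absurd rfl hi
    all_goals
      simp only [bary, Fin.reduceFinMk, Fin.isValue, if_true, show (2 : Fin 3) ≠ 1 by decide,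
        if_false]
      generalize hD_def : cross (b - a) (c - a) = D at hD ⊢
      field_simp
      simp only [← hD_def, cross, Prod.fst_sub, Prod.snd_sub, Prod.fst_add, Prod.snd_add,
        Prod.smul_fst, Prod.smul_snd, smul_eq_mul]
      ring
  fin_cases i
  · rw [Fin.sum_univ_three] at hκ
    simp only [Fin.zero_eta, bary_zero_eq, h₁₂ 1 (by decide), h₁₂ 2 (by decide)]
    linear_combination -hκ
  all_goals exact h₁₂ _ (by decide)

theorem add_bary_smul_add_bary_smul (hD : cross (b - a) (c - a) ≠ 0) (x : ℝ × ℝ) :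
    a + bary a b c x 1 • (b - a) + bary a b c x 2 • (c - a) = x := by
  simp only [bary, if_true, show (2 : Fin 3) ≠ 1 by decide, if_false]
  generalize hD_def : cross (b - a) (c - a) = D at hD ⊢
  ext <;> simp only [Prod.fst_add, Prod.snd_add, Prod.smul_fst, Prod.smul_snd, smul_eq_mul] <;>
    field_simp <;> simp only [← hD_def, cross, Prod.fst_sub, Prod.snd_sub] <;> ring

def corner (a b c : ℝ × ℝ) (κ : Fin 3 → ℝ) : Set (ℝ × ℝ) := {x | ∀ i, κ i ≤ bary a b c x i}

theorem corner_inter_corner (κ κ' : Fin 3 → ℝ) :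
    corner a b c κ ∩ corner a b c κ' = corner a b c (κ ⊔ κ') := by
  ext x
  simp only [corner, mem_inter_iff, mem_ofPred_eq, Pi.sup_apply, sup_le_iff, forall_and]

theorem corner_subset_tri {κ : Fin 3 → ℝ} (hκ : 0 ≤ κ) : corner a b c κ ⊆ tri a b c :=
  fun _ hx i => (hκ i).trans (hx i)

theorem isClosed_corner (a b c : ℝ × ℝ) (κ : Fin 3 → ℝ) : IsClosed (corner a b c κ) := by
  simp only [corner, ofPred_forall]
  exact isClosed_iInter fun i => isClosed_le continuous_const (continuous_bary a b c i)

theorem isClosed_tri (a b c : ℝ × ℝ) : IsClosed (tri a b c) := isClosed_corner a b c 0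

theorem isCompact_tri (hD : cross (b - a) (c - a) ≠ 0) : IsCompact (tri a b c) := by
  have hsub : tri a b c ⊆
      (fun t : ℝ × ℝ => a + t.1 • (b - a) + t.2 • (c - a)) '' (Icc 0 1 ×ˢ Icc 0 1) := by
    intro x hx
    refine ⟨(bary a b c x 1, bary a b c x 2), ⟨⟨hx 1, bary_le_one hx 1⟩, ⟨hx 2, bary_le_one hx 2⟩⟩,
      add_bary_smul_add_bary_smul hD x⟩
  exact ((isCompact_Icc.prod isCompact_Icc).image (by fun_prop)).of_isClosed_subset
    (isClosed_tri a b c) hsub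

theorem volume_tri_pos (hD : cross (b - a) (c - a) ≠ 0) : 0 < volume (tri a b c) := by
  have hcentroid : ∀ i,
      bary a b c (a + (1 / 3 : ℝ) • (b - a) + (1 / 3 : ℝ) • (c - a)) i = 1 / 3 := fun i => by
    simpa using bary_homothety (κ := fun _ => 1 / 3) (s := 0) hD
      (by norm_num [Fin.sum_univ_three]) a i
  have hopen : IsOpen {x | ∀ i, 0 < bary a b c x i} := by
    simp only [ofPred_forall]
    exact isOpen_iInter_of_finite fun i => isOpen_lt continuous_const (continuous_bary a b c i)
  calc 0 < volume {x | ∀ i, 0 < bary a b c x i} :=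
        hopen.measure_pos volume ⟨_, fun i => by rw [hcentroid]; norm_num⟩
    _ ≤ volume (tri a b c) := measure_mono fun x hx i => (hx i).le

theorem corner_eq_image (hD : cross (b - a) (c - a) ≠ 0) {κ : Fin 3 → ℝ} {s : ℝ} (hs : 0 < s)
    (hκ : ∑ i, κ i + s = 1) :
    corner a b c κ =
      (fun q => a + κ 1 • (b - a) + κ 2 • (c - a) + s • (q - a)) '' tri a b c := by
  ext p
  constructor
  · intro hp
    set v := a + κ 1 • (b - a) + κ 2 • (c - a)
    set q := a + s⁻¹ • (p - v)
    have hpq : v + s • (q - a) = p := by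
      simp only [q, add_sub_cancel_left, smul_inv_smul₀ hs.ne']
      abel
    refine ⟨q, fun i => ?_, hpq⟩
    have h := hp i
    rw [← hpq, bary_homothety hD hκ q i] at h
    exact (mul_nonneg_iff_of_pos_left hs).1 (by linarith)
  · rintro ⟨q, hq, rfl⟩ i
    rw [bary_homothety hD hκ q i]
    nlinarith [hq i]

theorem corner_subset_singleton (hD : cross (b - a) (c - a) ≠ 0) {κ : Fin 3 → ℝ}
    (hκ : 1 ≤ ∑ i, κ i) : corner a b c κ ⊆ {a + κ 1 • (b - a) + κ 2 • (c - a)} := by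
  intro p hp
  have hsum := sum_bary a b c p
  rw [Fin.sum_univ_three] at hsum hκ
  have h₁ : bary a b c p 1 = κ 1 := by linarith [hp 0, hp 1, hp 2]
  have h₂ : bary a b c p 2 = κ 2 := by linarith [hp 0, hp 1, hp 2]
  rw [mem_singleton_iff, ← h₁, ← h₂, add_bary_smul_add_bary_smul hD]

theorem volume_corner (hD : cross (b - a) (c - a) ≠ 0) (κ : Fin 3 → ℝ) :
    volume (corner a b c κ) = ENNReal.ofReal (max 0 (1 - ∑ i, κ i) ^ 2) * volume (tri a b c) := by
  set s := 1 - ∑ i, κ i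
  rcases le_or_gt s 0 with hs | hs
  · rw [max_eq_left hs, measure_mono_null (corner_subset_singleton hD (by linarith))
      (measure_singleton _)]
    simp
  have himage : (fun q => a + κ 1 • (b - a) + κ 2 • (c - a) + s • (q - a)) '' tri a b c =
      (a + κ 1 • (b - a) + κ 2 • (c - a) - s • a) +ᵥ (s • tri a b c) := by
    rw [← Set.image_smul, ← Set.image_vadd, Set.image_image]
    congr! 1 with q
    simp only [smul_sub, vadd_eq_add]
    abel
  rw [corner_eq_image hD hs (by ring), himage, measure_vadd, Measure.addHaar_smul,
    max_eq_right hs.le]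
  simp [abs_of_pos hs]

theorem measureReal_corner (hD : cross (b - a) (c - a) ≠ 0) (κ : Fin 3 → ℝ) :
    volume.real (corner a b c κ) = max 0 (1 - ∑ i, κ i) ^ 2 * volume.real (tri a b c) := by
  rw [measureReal_def, volume_corner hD, ENNReal.toReal_mul, ENNReal.toReal_ofReal (sq_nonneg _),
    measureReal_def]

theorem bary_le_bary_jmax (a b c x : ℝ × ℝ) (i : Fin 3) :
    bary a b c x i ≤ bary a b c x (jmax a b c x) := by
  unfold jmax
  split_ifs with h₀ h₁
  · fin_cases i <;> simp [h₀.1, h₀.2]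
  · have h : bary a b c x 0 ≤ bary a b c x 1 := by
      by_contra h
      exact h₀ ⟨(not_le.1 h).le, h₁.trans (not_le.1 h).le⟩
    fin_cases i <;> simp [h, h₁]
  · push Not at h₁
    have h : bary a b c x 0 ≤ bary a b c x 2 := by
      by_contra h
      push Not at h
      exact h₀ ⟨by linarith, h.le⟩
    fin_cases i <;> simp [h, h₁.le]

theorem bary_jmax_lt_iff (a b c x : ℝ × ℝ) (u : ℝ) :
    bary a b c x (jmax a b c x) < u ↔ ∀ i, bary a b c x i < u :=
  ⟨fun h i => (bary_le_bary_jmax a b c x i).trans_lt h, fun h => h _⟩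

theorem measurable_jmax (a b c : ℝ × ℝ) : Measurable (jmax a b c) := by
  have hb := fun i => (continuous_bary a b c i).measurable
  exact Measurable.ite ((measurableSet_le (hb 1) (hb 0)).inter (measurableSet_le (hb 2) (hb 0)))
    measurable_const
    (Measurable.ite (measurableSet_le (hb 2) (hb 1)) measurable_const measurable_const)

theorem Measurable.bary_jmax {α : Type*} [MeasurableSpace α] {f g : α → ℝ × ℝ}
    (hf : Measurable f) (hg : Measurable g) :
    Measurable fun p => bary a b c (f p) (jmax a b c (g p)) := by
  have h : Measurable fun q : (ℝ × ℝ) × Fin 3 => bary a b c q.1 q.2 :=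
    measurable_from_prod_countable_left fun i => (continuous_bary a b c i).measurable
  exact h.comp (hf.prodMk ((measurable_jmax a b c).comp hg))

theorem prox_eq_corner (a b c : ℝ × ℝ) (r : ℝ) (x : ℝ × ℝ) :
    prox a b c r x = corner a b c
      (Pi.single (jmax a b c x) (max 0 (1 - r * (1 - bary a b c x (jmax a b c x))))) := by
  ext z
  simp only [prox, corner, tri, mem_ofPred_eq]
  constructor
  · rintro ⟨hz, hle⟩ i
    rcases eq_or_ne i (jmax a b c x) with rfl | hi
    · simpa using ⟨hz _, by linarith⟩
    · simpa [hi] using hz i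
  · intro hz
    refine ⟨fun i => le_trans ?_ (hz i), ?_⟩
    · rcases eq_or_ne i (jmax a b c x) with rfl | hi <;> simp [*]
    · have h := hz (jmax a b c x)
      simp only [Pi.single_eq_same, max_le_iff] at h
      linarith

theorem volume_prox (hD : cross (b - a) (c - a) ≠ 0) {r : ℝ} (hr : 0 ≤ r) {x : ℝ × ℝ}
    (hx : x ∈ tri a b c) :
    volume (prox a b c r x) =
      ENNReal.ofReal (min 1 (r * (1 - bary a b c x (jmax a b c x))) ^ 2) *
        volume (tri a b c) := by
  set m := r * (1 - bary a b c x (jmax a b c x))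
  have hm : 0 ≤ m := mul_nonneg hr (sub_nonneg.2 (bary_le_one hx _))
  rw [prox_eq_corner, volume_corner hD, Finset.sum_pi_single', if_pos (Finset.mem_univ _)]
  congr 3
  rcases le_total m 1 with h | h
  · rw [max_eq_right (sub_nonneg.2 h), sub_sub_cancel, max_eq_right hm, min_eq_right h]
  · rw [max_eq_left (show 1 - m ≤ 0 by linarith), sub_zero, max_eq_right zero_le_one,
      min_eq_left h]

theorem unif_tri_prox (hD : cross (b - a) (c - a) ≠ 0) {r : ℝ} (hr : 0 ≤ r) {x : ℝ × ℝ}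
    (hx : x ∈ tri a b c) :
    unif (tri a b c) (prox a b c r x) =
      ENNReal.ofReal (min 1 (r * (1 - bary a b c x (jmax a b c x))) ^ 2) := by
  rw [unif, Measure.smul_apply, Measure.restrict_apply' (isClosed_tri a b c).measurableSet,
    inter_eq_left.2 fun z hz => hz.1, volume_prox hD hr hx, smul_eq_mul, mul_comm, mul_assoc,
    ENNReal.mul_inv_cancel (volume_tri_pos hD).ne' (isCompact_tri hD).measure_lt_top.ne, mul_one]

theorem unif_prod_unif_prox (hD : cross (b - a) (c - a) ≠ 0) {r : ℝ} (hr : 0 ≤ r) :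
    (unif (tri a b c)).prod (unif (tri a b c)) {p | p.2 ∈ prox a b c r p.1} =
      (volume (tri a b c))⁻¹ * ∫⁻ x in tri a b c,
        ENNReal.ofReal (min 1 (r * (1 - bary a b c x (jmax a b c x))) ^ 2) := by
  have hmeas : MeasurableSet {p : (ℝ × ℝ) × (ℝ × ℝ) | p.2 ∈ prox a b c r p.1} :=
    ((isClosed_tri a b c).measurableSet.preimage measurable_snd).inter
      (measurableSet_le (measurable_const.sub (measurable_snd.bary_jmax measurable_fst))
        (measurable_const.mul (measurable_const.sub (measurable_fst.bary_jmax measurable_fst))))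
  have : SFinite (unif (tri a b c)) := by
    unfold unif
    infer_instance
  calc _ = ∫⁻ x, unif (tri a b c) (prox a b c r x) ∂unif (tri a b c) := Measure.prod_apply hmeas
    _ = (volume (tri a b c))⁻¹ * ∫⁻ x in tri a b c, unif (tri a b c) (prox a b c r x) :=
      lintegral_smul_measure _ _
    _ = _ := by
      rw [setLIntegral_congr_fun (isClosed_tri a b c).measurableSet fun x hx =>
        unif_tri_prox hD hr hx]

theorem setOf_bary_jmax_lt_inter_tri (a b c : ℝ × ℝ) (u : ℝ) :
    {x | bary a b c x (jmax a b c x) < u} ∩ tri a b c =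
      tri a b c \
        (corner a b c ![u, 0, 0] ∪ corner a b c ![0, u, 0] ∪ corner a b c ![0, 0, u]) := by
  ext x
  simp only [mem_inter_iff, mem_ofPred_eq, mem_sdiff, bary_jmax_lt_iff]
  refine and_comm.trans (and_congr_right fun hx => ⟨?_, fun hn i => ?_⟩)
  · rintro hlt ((h | h) | h)
    exacts [(h 0).not_gt (hlt 0), (h 1).not_gt (hlt 1), (h 2).not_gt (hlt 2)]
  · by_contra! hi
    refine hn ?_
    fin_cases i <;> simp only [Fin.zero_eta, Fin.mk_one, Fin.reduceFinMk] at hi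
    exacts [.inl (.inl fun j => by fin_cases j <;> simp [hi, hx _]),
      .inl (.inr fun j => by fin_cases j <;> simp [hi, hx _]),
      .inr fun j => by fin_cases j <;> simp [hi, hx _]]

theorem volume_restrict_tri_lt_one_sub_bary_jmax (hD : cross (b - a) (c - a) ≠ 0) {w : ℝ}
    (hw₀ : 0 ≤ w) (hw₁ : w ≤ 1) :
    volume.restrict (tri a b c) {x | w < 1 - bary a b c x (jmax a b c x)} =
      ENNReal.ofReal (tailProb w) * volume (tri a b c) := by
  obtain ⟨u, rfl, hu⟩ : ∃ u, w = 1 - u ∧ 0 ≤ u := ⟨1 - w, by ring, by linarith⟩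
  have hV : volume (tri a b c) ≠ ⊤ := (isCompact_tri hD).measure_lt_top.ne
  have hmeas : ∀ κ, MeasurableSet (corner a b c κ) := fun κ =>
    (isClosed_corner a b c κ).measurableSet
  have hfin : ∀ κ : Fin 3 → ℝ, 0 ≤ κ → volume (corner a b c κ) ≠ ⊤ := fun κ hκ =>
    ne_top_of_le_ne_top hV (measure_mono (corner_subset_tri hκ))
  have h₀ : (0 : Fin 3 → ℝ) ≤ ![u, 0, 0] := fun i => by fin_cases i <;> simp [hu]
  have h₁ : (0 : Fin 3 → ℝ) ≤ ![0, u, 0] := fun i => by fin_cases i <;> simp [hu]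
  have h₂ : (0 : Fin 3 → ℝ) ≤ ![0, 0, u] := fun i => by fin_cases i <;> simp [hu]
  simp only [sub_lt_sub_iff_left]
  rw [Measure.restrict_apply' (isClosed_tri a b c).measurableSet,
    setOf_bary_jmax_lt_inter_tri, ← ofReal_measureReal (measure_ne_top_of_subset sdiff_subset hV),
    measureReal_sdiff (union_subset (union_subset (corner_subset_tri h₀) (corner_subset_tri h₁))
        (corner_subset_tri h₂)) (((hmeas _).union (hmeas _)).union (hmeas _)),
    measureReal_union_union (hmeas _) (hmeas _) (hfin _ h₀) (hfin _ h₁) (hfin _ h₂)]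
  simp only [corner_inter_corner, measureReal_corner hD]
  conv_rhs => rw [← ofReal_measureReal hV]
  rw [← ENNReal.ofReal_mul' measureReal_nonneg]
  congr 1
  simp only [Fin.sum_univ_three, Fin.isValue, Matrix.cons_val_zero, Matrix.cons_val_one,
    Matrix.cons_val, Pi.sup_apply, add_zero, zero_add, hu, sup_of_le_left, sup_of_le_right,
    max_self, tailProb]
  rw [max_eq_right hw₀, show 1 - (u + u) = 2 * (1 - u) - 1 by ring,
    show 1 - (u + u + u) = 3 * (1 - u) - 2 by ring]
  ring

theorem volume_restrict_tri_lt_min (hD : cross (b - a) (c - a) ≠ 0) {r t : ℝ} (hr : 1 ≤ r)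
    (ht₀ : 0 < t) (ht₁ : t < 1) :
    volume.restrict (tri a b c) {x | t < min 1 (r * (1 - bary a b c x (jmax a b c x)))} =
      ENNReal.ofReal (tailProb (t / r)) * volume (tri a b c) := by
  have hset : {x | t < min 1 (r * (1 - bary a b c x (jmax a b c x)))} =
      {x | t / r < 1 - bary a b c x (jmax a b c x)} := by
    ext x
    simp only [lt_min_iff, mem_ofPred_eq, ht₁, true_and]
    rw [div_lt_iff₀ (by linarith), mul_comm]
  rw [hset, volume_restrict_tri_lt_one_sub_bary_jmax hD (by positivity)
    (div_le_one_of_le₀ (by linarith) (by linarith))]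

theorem lintegral_tri_min_sq (hD : cross (b - a) (c - a) ≠ 0) {r : ℝ} (hr : 1 ≤ r) :
    ∫⁻ x in tri a b c, ENNReal.ofReal (min 1 (r * (1 - bary a b c x (jmax a b c x))) ^ 2) =
      ENNReal.ofReal (∫ t in (0 : ℝ)..1, 2 * t * tailProb (t / r)) * volume (tri a b c) := by
  have hpiece : ∀ t ∈ Ioi (0 : ℝ),
      volume.restrict (tri a b c) {x | t < min 1 (r * (1 - bary a b c x (jmax a b c x)))} *
        ENNReal.ofReal (2 * t) =
      (Ioo 0 1).indicator (fun t => ENNReal.ofReal (2 * t * tailProb (t / r))) t *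
        volume (tri a b c) := by
    intro t (ht : 0 < t)
    rcases lt_or_ge t 1 with ht₁ | ht₁
    · rw [volume_restrict_tri_lt_min hD hr ht ht₁,
        indicator_of_mem (show t ∈ Ioo 0 1 from ⟨ht, ht₁⟩),
        ENNReal.ofReal_mul (p := 2 * t) (by positivity)]
      ring
    · have hempty : {x | t < min 1 (r * (1 - bary a b c x (jmax a b c x)))} = ∅ :=
        eq_empty_of_forall_notMem fun x hx => (lt_of_lt_of_le hx (min_le_left _ _)).not_ge ht₁
      rw [hempty, measure_empty, zero_mul, indicator_of_notMem fun h => h.2.not_ge ht₁, zero_mul]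
  have hcont : Continuous fun t => 2 * t * tailProb (t / r) := by
    have := continuous_tailProb
    fun_prop
  have hf_meas : Measurable fun x => min 1 (r * (1 - bary a b c x (jmax a b c x))) :=
    measurable_const.min (measurable_const.mul (measurable_const.sub
      (measurable_id.bary_jmax measurable_id)))
  rw [lintegral_ofReal_sq _
      ((ae_restrict_iff' (isClosed_tri a b c).measurableSet).2 (.of_forall fun x hx =>
        le_min zero_le_one (mul_nonneg (by linarith) (sub_nonneg.2 (bary_le_one hx _)))))
      hf_meas.aemeasurable,
    setLIntegral_congr_fun measurableSet_Ioi hpiece,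
    lintegral_mul_const' _ _ (isCompact_tri hD).measure_lt_top.ne,
    setLIntegral_indicator measurableSet_Ioo, inter_eq_left.2 Ioo_subset_Ioi_self,
    setLIntegral_Ioo_ofReal zero_le_one hcont.continuousOn fun t ht =>
      mul_nonneg (by linarith [ht.1]) (tailProb_nonneg (div_nonneg ht.1.le (by linarith)))]

theorem toReal_unif_prod_unif_prox (hD : cross (b - a) (c - a) ≠ 0) {r : ℝ} (hr : 1 ≤ r) :
    ((unif (tri a b c)).prod (unif (tri a b c)) {p | p.2 ∈ prox a b c r p.1}).toReal =
      ∫ t in (0 : ℝ)..1, 2 * t * tailProb (t / r) := by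
  rw [unif_prod_unif_prox hD (by linarith), lintegral_tri_min_sq hD hr, mul_comm, mul_assoc,
    ENNReal.mul_inv_cancel (volume_tri_pos hD).ne' (isCompact_tri hD).measure_lt_top.ne, mul_one,
    ENNReal.toReal_ofReal (intervalIntegral.integral_nonneg zero_le_one fun t ht =>
      mul_nonneg (by linarith [ht.1]) (tailProb_nonneg (div_nonneg ht.1 (by linarith))))]

end Barycentric

/-- Theorem 2 (mean): the null arc probability `μ(r)` piecewise. -/
theorem arc_probability_null (r : ℝ) :
    (r ∈ Set.Ico (1 : ℝ) (3 / 2) → mu r = 37 / 216 * r ^ 2) ∧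
    (r ∈ Set.Ico (3 / 2 : ℝ) 2 →
      mu r = -(r ^ 2) / 8 + 4 - 8 * r⁻¹ + 9 / 2 * (r ^ 2)⁻¹) ∧
    (r ∈ Set.Ici (2 : ℝ) → mu r = 1 - 3 / 2 * (r ^ 2)⁻¹) := by
  have hD : cross (y2 - y1) (y3 - y1) ≠ 0 := by norm_num [cross, y1, y2, y3]
  have hmu : ∀ r, 1 ≤ r → mu r = r ^ 2 * tailMoment (1 / r) := fun r hr =>
    (toReal_unif_prod_unif_prox hD hr).trans (integral_tailProb_div (by positivity))
  refine ⟨fun ⟨h₁, h₂⟩ => ?_, fun ⟨h₁, h₂⟩ => ?_, fun (h : 2 ≤ r) => ?_⟩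
  · rw [hmu r h₁, tailMoment_of_two_thirds_le (by rw [le_div_iff₀ (by positivity)]; linarith)]
    ring
  · rw [hmu r (by linarith), tailMoment_of_mem_Icc (by rw [le_div_iff₀ (by positivity)]; linarith)
      (by rw [div_le_iff₀ (by positivity)]; linarith)]
    field_simp
  · rw [hmu r (by linarith), tailMoment_of_le_half (by positivity)
      (by rw [div_le_iff₀ (by positivity)]; linarith)]
    field_simp
end
end

section
/- The arc probability μ(r) := P(X₂ ∈ N^r(X₁)), for X₁, X₂ independent with law U_T, is strictly increasing on [1,∞): for all 1 ≤ r₁ < r₂ one has μ(r₁) < μ(r₂). Moreover μ(r) < 1 for every r ∈ [1,∞) and μ(r) → 1 as r → ∞. -/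
open MeasureTheory Real Set

noncomputable section

/-!
All the ingredients are affine invariant, so the argument is run for an arbitrary nondegenerate
triangle `abc`. Since `1 - β_j(x) ≥ 0` on the triangle, `N^r(x)` grows with `r`. For
`1 ≤ r₁ < r₂` the pairs `(x, z)` with `1 - β₀(x)` slightly above `1 / (2 r₂)` and `1 - β₀(z)`
slightly below `1 / 2` form a product of open sets, hence of positive measure; near the vertex
`a` one has `j(x) = 0`, so these pairs lie in the `r₂`-event but not in the `r₁`-event. This gives
strict monotonicity, and then `μ(r) < μ(r + 1) ≤ 1`. Finally every `z` lies in `N^r(x)` for large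
`r` unless `x` is a vertex, so the events exhaust the product up to a null set and continuity
from below gives `μ(r) → 1`.
-/

open ProbabilityTheory Filter Topology
open scoped ENNReal

lemma measure_lt_measure_of_subset_of_pos {α : Type*} [MeasurableSpace α] {μ : Measure α}
    {s t w : Set α} (hst : s ⊆ t) (hw : MeasurableSet w) (hwt : w ⊆ t \ s) (hs : μ s ≠ ∞)
    (hpos : 0 < μ w) : μ s < μ t :=
  calc μ s < μ s + μ w := ENNReal.lt_add_right hs hpos.ne'
    _ = μ (s ∪ w) := (measure_union (disjoint_left.2 fun _ hx hw => (hwt hw).2 hx) hw).symm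
    _ ≤ μ t := measure_mono (union_subset hst fun _ hx => (hwt hx).1)

lemma unif_eq_cond (s : Set (ℝ × ℝ)) : unif s = cond volume s := rfl

instance (s : Set (ℝ × ℝ)) : IsZeroOrProbabilityMeasure (unif s) :=
  inferInstanceAs (IsZeroOrProbabilityMeasure (cond volume s))

-- Cramer's rule in the plane.
lemma cross_smul_eq (u v w : ℝ × ℝ) : cross u v • w = cross w v • u + cross u w • v := by
  ext <;> simp [cross] <;> ring

namespace Triangle

variable {a b c : ℝ × ℝ}

lemma bary_zero_add_one_add_two (x : ℝ × ℝ) :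
    bary a b c x 0 + bary a b c x 1 + bary a b c x 2 = 1 := by
  simp [bary]; ring

lemma bary_le_one {x : ℝ × ℝ} (hx : x ∈ tri a b c) (i : Fin 3) : bary a b c x i ≤ 1 := by
  have := bary_zero_add_one_add_two (a := a) (b := b) (c := c) x
  have h0 := hx 0; have h1 := hx 1; have h2 := hx 2
  fin_cases i <;> simp <;> linarith

lemma continuous_bary (i : Fin 3) : Continuous fun x => bary a b c x i := by
  simp only [bary, cross]; split_ifs <;> fun_prop

lemma isClosed_tri : IsClosed (tri a b c) := by
  simp only [tri, ofPred_forall]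
  exact isClosed_iInter fun i => isClosed_le continuous_const (continuous_bary i)

lemma bary_add_smul_add_smul (habc : cross (b - a) (c - a) ≠ 0) (s t : ℝ) :
    bary a b c (a + s • (b - a) + t • (c - a)) = ![1 - s - t, s, t] := by
  have hx : a + s • (b - a) + t • (c - a) - a = s • (b - a) + t • (c - a) := by abel
  have h1 : cross (s • (b - a) + t • (c - a)) (c - a) = s * cross (b - a) (c - a) := by
    simp only [cross]; simp; ring
  have h2 : cross (b - a) (s • (b - a) + t • (c - a)) = t * cross (b - a) (c - a) := by
    simp only [cross]; simp; ring
  funext i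
  fin_cases i <;> simp [bary, hx, h1, h2, habc]

lemma eq_add_bary_smul_add_bary_smul (habc : cross (b - a) (c - a) ≠ 0) (x : ℝ × ℝ) :
    x = a + bary a b c x 1 • (b - a) + bary a b c x 2 • (c - a) := by
  have hβ : bary a b c x 1 • (b - a) + bary a b c x 2 • (c - a) = x - a := by
    simp only [bary, if_true, Fin.reduceEq, if_false]
    rw [div_eq_inv_mul, div_eq_inv_mul, mul_smul, mul_smul, ← smul_add, ← cross_smul_eq,
      smul_smul, inv_mul_cancel₀ habc, one_smul]
  rw [add_assoc, hβ, add_sub_cancel]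

lemma mem_vertices_of_bary_eq_one (habc : cross (b - a) (c - a) ≠ 0) {x : ℝ × ℝ}
    (hx : x ∈ tri a b c) {i : Fin 3} (hi : bary a b c x i = 1) : x ∈ ({a, b, c} : Set _) := by
  have hsum := bary_zero_add_one_add_two (a := a) (b := b) (c := c) x
  have h0 := hx 0; have h1 := hx 1; have h2 := hx 2
  rw [eq_add_bary_smul_add_bary_smul habc x]
  fin_cases i
  · have e1 : bary a b c x 1 = 0 := by simp at hi; linarith
    have e2 : bary a b c x 2 = 0 := by simp at hi; linarith
    simp [e1, e2]
  · have e2 : bary a b c x 2 = 0 := by simp at hi; linarith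
    simp_all
  · have e1 : bary a b c x 1 = 0 := by simp at hi; linarith
    simp_all

lemma isBounded_tri (habc : cross (b - a) (c - a) ≠ 0) : Bornology.IsBounded (tri a b c) := by
  refine (Metric.isBounded_closedBall (x := a) (r := ‖b - a‖ + ‖c - a‖)).subset fun x hx => ?_
  have h1 := bary_le_one hx 1; have h2 := bary_le_one hx 2
  have h1' := hx 1; have h2' := hx 2
  rw [Metric.mem_closedBall, dist_eq_norm]
  conv_lhs => rw [eq_add_bary_smul_add_bary_smul habc x, add_assoc, add_sub_cancel_left]
  calc _ ≤ ‖bary a b c x 1 • (b - a)‖ + ‖bary a b c x 2 • (c - a)‖ := norm_add_le _ _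
    _ ≤ ‖b - a‖ + ‖c - a‖ := by
      rw [norm_smul, norm_smul, Real.norm_of_nonneg h1', Real.norm_of_nonneg h2']
      gcongr <;> exact mul_le_of_le_one_left (norm_nonneg _) ‹_›

/-- An open trapezoid: the interior points between the lines `1 - β₀ = l` and `1 - β₀ = u`,
both parallel to `bc`. -/
def strip (a b c : ℝ × ℝ) (l u : ℝ) : Set (ℝ × ℝ) :=
  {x | (∀ i, 0 < bary a b c x i) ∧ l < 1 - bary a b c x 0 ∧ 1 - bary a b c x 0 < u}

lemma isOpen_strip (l u : ℝ) : IsOpen (strip a b c l u) := by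
  have h0 := continuous_bary (a := a) (b := b) (c := c) 0
  simp only [strip, ofPred_and, ofPred_forall]
  exact (isOpen_iInter_of_finite fun i => isOpen_lt continuous_const (continuous_bary i)).inter
    ((isOpen_lt continuous_const (by fun_prop)).inter (isOpen_lt (by fun_prop) continuous_const))

lemma strip_subset_tri (l u : ℝ) : strip a b c l u ⊆ tri a b c :=
  fun _ hx i => (hx.1 i).le

lemma strip_nonempty (habc : cross (b - a) (c - a) ≠ 0) {l u : ℝ} (hl : 0 ≤ l) (hlu : l < u)
    (hu : u ≤ 1) : (strip a b c l u).Nonempty := by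
  obtain ⟨m, hlm, hmu⟩ := exists_between hlu
  refine ⟨a + (m / 2) • (b - a) + (m / 2) • (c - a), fun i => ?_, ?_, ?_⟩ <;>
    [fin_cases i; skip; skip] <;> simp [bary_add_smul_add_smul habc] <;> linarith

lemma jmax_eq_zero_of_mem_strip {l u : ℝ} (hu : u ≤ 1 / 2) {x : ℝ × ℝ}
    (hx : x ∈ strip a b c l u) : jmax a b c x = 0 := by
  have hsum := bary_zero_add_one_add_two (a := a) (b := b) (c := c) x
  have h1 := hx.1 1; have h2 := hx.1 2
  exact if_pos ⟨by linarith [hx.2.2], by linarith [hx.2.2]⟩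

lemma volume_tri_ne_zero (habc : cross (b - a) (c - a) ≠ 0) : volume (tri a b c) ≠ 0 :=
  ((isOpen_strip 0 1).measure_pos volume (strip_nonempty habc le_rfl one_pos le_rfl)).ne'
    ∘ measure_mono_null (strip_subset_tri 0 1)

lemma isProbabilityMeasure_unif_tri (habc : cross (b - a) (c - a) ≠ 0) :
    IsProbabilityMeasure (unif (tri a b c)) :=
  cond_isProbabilityMeasure_of_finite (volume_tri_ne_zero habc)
    (isBounded_tri habc).measure_lt_top.ne

lemma unif_tri_compl : unif (tri a b c) (tri a b c)ᶜ = 0 := by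
  rw [unif_eq_cond, cond_apply isClosed_tri.measurableSet, inter_compl_self, measure_empty,
    mul_zero]

lemma unif_tri_vertices : unif (tri a b c) {a, b, c} = 0 :=
  cond_absolutelyContinuous ((toFinite _).measure_zero _)

lemma unif_tri_strip_pos (habc : cross (b - a) (c - a) ≠ 0) {l u : ℝ} (hl : 0 ≤ l)
    (hlu : l < u) (hu : u ≤ 1) : 0 < unif (tri a b c) (strip a b c l u) := by
  rw [unif_eq_cond, cond_apply' (isOpen_strip l u).measurableSet,
    inter_eq_right.2 (strip_subset_tri l u)]
  exact ENNReal.mul_pos (ENNReal.inv_ne_zero.2 (isBounded_tri habc).measure_lt_top.ne)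
    ((isOpen_strip l u).measure_pos volume (strip_nonempty habc hl hlu hu)).ne'

def arcSet (a b c : ℝ × ℝ) (r : ℝ) : Set ((ℝ × ℝ) × (ℝ × ℝ)) :=
  {p | p.1 ∈ tri a b c ∧ p.2 ∈ prox a b c r p.1}

def arcProb (a b c : ℝ × ℝ) (r : ℝ) : ℝ :=
  (((unif (tri a b c)).prod (unif (tri a b c))) {p | p.2 ∈ prox a b c r p.1}).toReal

lemma monotone_arcSet : Monotone (arcSet a b c) := by
  rintro r₁ r₂ hr p ⟨hx, hz, hle⟩
  have := bary_le_one hx (jmax a b c p.1)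
  exact ⟨hx, hz, hle.trans (by gcongr)⟩

lemma mem_prox_iff_of_mem_strip {l u r : ℝ} (hu : u ≤ 1 / 2) {x z : ℝ × ℝ}
    (hx : x ∈ strip a b c l u) :
    z ∈ prox a b c r x ↔ z ∈ tri a b c ∧ 1 - bary a b c z 0 ≤ r * (1 - bary a b c x 0) := by
  simp only [prox, jmax_eq_zero_of_mem_strip hu hx, mem_ofPred_eq]

lemma prod_strip_subset_arcSet_diff {r₁ r₂ : ℝ} (h1 : 1 ≤ r₁) (h12 : r₁ < r₂) :
    strip a b c (1 / (2 * r₂)) (1 / (r₁ + r₂)) ×ˢ strip a b c (r₁ / (r₁ + r₂)) (1 / 2) ⊆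
      arcSet a b c r₂ \ arcSet a b c r₁ := by
  have hr₂ : 0 < r₂ := by linarith
  have hu : 1 / (r₁ + r₂) ≤ 1 / 2 := by gcongr; linarith
  rintro ⟨x, z⟩ ⟨hx, hz⟩
  simp only [arcSet, Set.mem_sdiff, mem_ofPred_eq, mem_prox_iff_of_mem_strip hu hx]
  have hxl := hx.2.1; have hxu := hx.2.2; have hzl := hz.2.1; have hzu := hz.2.2
  rw [div_lt_iff₀ (by positivity)] at hxl hzl
  rw [lt_div_iff₀ (by positivity)] at hxu
  refine ⟨⟨strip_subset_tri _ _ hx, strip_subset_tri _ _ hz, by nlinarith⟩, fun h => ?_⟩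
  nlinarith [h.2.2]

lemma prod_unif_arcSet (r : ℝ) :
    (unif (tri a b c)).prod (unif (tri a b c)) {p | p.2 ∈ prox a b c r p.1} =
      (unif (tri a b c)).prod (unif (tri a b c)) (arcSet a b c r) := by
  have hnull : (unif (tri a b c)).prod (unif (tri a b c)) (tri a b c ×ˢ univ)ᶜ = 0 := by
    rw [compl_prod_eq_union, compl_univ, prod_empty, union_empty, Measure.prod_prod,
      unif_tri_compl, zero_mul]
  rw [← measure_inter_conull hnull]
  congr 1
  ext p
  simp only [arcSet, mem_inter_iff, mem_ofPred_eq, mem_prod, mem_univ, and_true]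
  exact and_comm

lemma prod_tri_diff_subset_iUnion_arcSet (habc : cross (b - a) (c - a) ≠ 0) :
    tri a b c ×ˢ tri a b c \ {a, b, c} ×ˢ univ ⊆ ⋃ r, arcSet a b c r := by
  rintro ⟨x, z⟩ ⟨⟨hx, hz⟩, hxv⟩
  set j := jmax a b c x
  have hβ : bary a b c x j < 1 := (bary_le_one hx j).lt_of_ne fun h =>
    hxv ⟨mem_vertices_of_bary_eq_one habc hx h, trivial⟩
  refine mem_iUnion.2 ⟨1 / (1 - bary a b c x j), hx, hz, ?_⟩
  rw [one_div_mul_cancel (sub_pos.2 hβ).ne']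
  linarith [hz j]

lemma prod_unif_iUnion_arcSet (habc : cross (b - a) (c - a) ≠ 0) :
    (unif (tri a b c)).prod (unif (tri a b c)) (⋃ r, arcSet a b c r) = 1 := by
  have := isProbabilityMeasure_unif_tri habc
  have hvert : (unif (tri a b c)).prod (unif (tri a b c)) ({a, b, c} ×ˢ univ) = 0 := by
    rw [Measure.prod_prod, unif_tri_vertices, zero_mul]
  have htri : unif (tri a b c) (tri a b c) = 1 :=
    cond_apply_self (volume_tri_ne_zero habc) (isBounded_tri habc).measure_lt_top.ne
  refine le_antisymm prob_le_one ?_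
  calc (1 : ℝ≥0∞) = (unif (tri a b c)).prod (unif (tri a b c)) (tri a b c ×ˢ tri a b c) := by
        rw [Measure.prod_prod, htri, one_mul]
    _ = _ := (measure_sdiff_null hvert).symm
    _ ≤ _ := measure_mono (prod_tri_diff_subset_iUnion_arcSet habc)

lemma arcProb_eq (r : ℝ) :
    arcProb a b c r = ((unif (tri a b c)).prod (unif (tri a b c)) (arcSet a b c r)).toReal := by
  rw [arcProb, prod_unif_arcSet]

lemma arcProb_strictMonoOn (habc : cross (b - a) (c - a) ≠ 0) :
    StrictMonoOn (arcProb a b c) (Ici 1) := by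
  rintro r₁ (h1 : 1 ≤ r₁) r₂ - h12
  have hr₁ : 0 < r₁ := by linarith
  have hr₂ : 0 < r₂ := by linarith
  have hpos : 0 < (unif (tri a b c)).prod (unif (tri a b c))
      (strip a b c (1 / (2 * r₂)) (1 / (r₁ + r₂)) ×ˢ strip a b c (r₁ / (r₁ + r₂)) (1 / 2)) := by
    rw [Measure.prod_prod]
    refine ENNReal.mul_pos (unif_tri_strip_pos habc (by positivity) ?_ ?_).ne'
      (unif_tri_strip_pos habc (by positivity) ?_ (by norm_num)).ne'
    · gcongr; linarith
    · rw [div_le_one (by positivity)]; linarith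
    · rw [div_lt_iff₀ (by positivity)]; linarith
  rw [arcProb_eq, arcProb_eq, ENNReal.toReal_lt_toReal (measure_ne_top _ _) (measure_ne_top _ _)]
  exact measure_lt_measure_of_subset_of_pos (monotone_arcSet h12.le)
    ((isOpen_strip _ _).measurableSet.prod (isOpen_strip _ _).measurableSet)
    (prod_strip_subset_arcSet_diff h1 h12) (measure_ne_top _ _) hpos

lemma arcProb_lt_one (habc : cross (b - a) (c - a) ≠ 0) {r : ℝ} (hr : 1 ≤ r) :
    arcProb a b c r < 1 := by
  have := isProbabilityMeasure_unif_tri habc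
  calc arcProb a b c r < arcProb a b c (r + 1) :=
        arcProb_strictMonoOn habc hr (by simp only [mem_Ici]; linarith) (lt_add_one r)
    _ ≤ 1 := measureReal_le_one

lemma tendsto_arcProb_atTop (habc : cross (b - a) (c - a) ≠ 0) :
    Tendsto (arcProb a b c) atTop (𝓝 1) := by
  have h := tendsto_measure_iUnion_atTop (μ := (unif (tri a b c)).prod (unif (tri a b c)))
    (monotone_arcSet (a := a) (b := b) (c := c))
  rw [prod_unif_iUnion_arcSet habc] at h
  simpa only [Function.comp_def, ← arcProb_eq, ENNReal.toReal_one] using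
    (ENNReal.tendsto_toReal ENNReal.one_ne_top).comp h

end Triangle

lemma cross_y_ne_zero : cross (y2 - y1) (y3 - y1) ≠ 0 := by
  simp [cross, y1, y2, y3]

/-- The null arc probability `μ(r)` is strictly increasing on `[1, ∞)`,
is always `< 1` there, and tends to `1` as `r → ∞`. -/
theorem mu_strictMono_lt_one_tendsto_one :
    (∀ r₁ r₂ : ℝ, 1 ≤ r₁ → r₁ < r₂ → mu r₁ < mu r₂) ∧
    (∀ r : ℝ, 1 ≤ r → mu r < 1) ∧
    Filter.Tendsto mu Filter.atTop (nhds 1) :=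
  ⟨fun _ _ h1 h12 => Triangle.arcProb_strictMonoOn cross_y_ne_zero h1
      (mem_Ici.2 (h1.trans h12.le)) h12,
    fun _ => Triangle.arcProb_lt_one cross_y_ne_zero,
    Triangle.tendsto_arcProb_atTop cross_y_ne_zero⟩
end
end
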